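/- arXiv:0711.4151 — 3 statements merged into one kernel-verified Lean document; each statement's English description precedes it below -/
import Mathlib

section
/- If m ≥ 1, n ≥ 1 and mn is even, then the dimension of the perfect matching polytope P(m,n) of the grid graph G(m,n) equals (m−1)(n−1). -/
open Finset Pointwise

/-- The perfect matching polytope of a graph `G`: the convex hull in `ℝ^{Sym2 V}`
of the 0/1 incidence vectors of the perfect matchings of `G`. -/
noncomputable def pmPolytope {V : Type*} (G : SimpleGraph V) : Set (Sym2 V → ℝ) :=
  convexHull ℝ
    {x | ∃ M : G.Subgraph, M.IsPerfectMatching ∧ x = Set.indicator M.edgeSet 1}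

/-- The number of lattice points in the dilate `t • P`. -/
noncomputable def latticeCount {ι : Type*} (P : Set (ι → ℝ)) (t : ℕ) : ℕ :=
  Nat.card {x : ι → ℤ // (fun i => (x i : ℝ)) ∈ (t : ℝ) • P}

/-- The number of lattice points in the relative interior of the dilate `t • P`. -/
noncomputable def interiorLatticeCount {ι : Type*} (P : Set (ι → ℝ)) (t : ℕ) : ℕ :=
  Nat.card {x : ι → ℤ // (fun i => (x i : ℝ)) ∈ intrinsicInterior ℝ ((t : ℝ) • P)}

/-- A polytope `P` is Gorenstein of index `k` if `L_{P°}(t) = 0` for `0 < t < k`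
and `L_{P°}(t) = L_P(t - k)` for all `t ≥ k`. -/
def IsGorensteinOfIndex {ι : Type*} (P : Set (ι → ℝ)) (k : ℕ) : Prop :=
  (∀ t : ℕ, 0 < t → t < k → interiorLatticeCount P t = 0) ∧
  ∀ t : ℕ, k ≤ t → interiorLatticeCount P t = latticeCount P (t - k)

/-- The `m × n` grid graph: vertices `(i, j)` with `0 ≤ i < n`, `0 ≤ j < m`,
adjacent iff `|i - i'| + |j - j'| = 1`. -/
def gridGraph (m n : ℕ) : SimpleGraph (Fin n × Fin m) where
  Adj p q := Nat.dist p.1.val q.1.val + Nat.dist p.2.val q.2.val = 1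
  symm := by
    constructor
    intro p q h
    simpa [Nat.dist_comm] using h
  loopless := by
    constructor
    intro p h
    simp [Nat.dist_self] at h

/-- The `m × n` torus graph: the grid graph together with the wrap-around edges
`{(0,j),(n-1,j)}` and `{(i,0),(i,m-1)}`. -/
def torusGraph (m n : ℕ) : SimpleGraph (Fin n × Fin m) where
  Adj p q := p ≠ q ∧
    (Nat.dist p.1.val q.1.val + Nat.dist p.2.val q.2.val = 1 ∨
     (p.2 = q.2 ∧ ((p.1.val = 0 ∧ q.1.val = n - 1) ∨ (p.1.val = n - 1 ∧ q.1.val = 0))) ∨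
     (p.1 = q.1 ∧ ((p.2.val = 0 ∧ q.2.val = m - 1) ∨ (p.2.val = m - 1 ∧ q.2.val = 0))))
  symm := by
    constructor
    rintro p q ⟨hne, h⟩
    refine ⟨hne.symm, ?_⟩
    rcases h with h | ⟨h1, h2⟩ | ⟨h1, h2⟩
    · exact Or.inl (by simpa [Nat.dist_comm] using h)
    · exact Or.inr (Or.inl ⟨h1.symm, by tauto⟩)
    · exact Or.inr (Or.inr ⟨h1.symm, by tauto⟩)
  loopless := ⟨fun p h => h.1 rfl⟩

/-- A magic labelling of sum `t` of a graph `G`: a nonnegative integer label on each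
edge (zero on non-edges) such that at every vertex the incident labels sum to `t`. -/
def IsMagicLabelling {V : Type*} [Fintype V] [DecidableEq V]
    (G : SimpleGraph V) (x : Sym2 V → ℕ) (t : ℕ) : Prop :=
  (∀ e, e ∉ G.edgeSet → x e = 0) ∧
  ∀ v : V, ∑ e ∈ Finset.univ.filter (fun e : Sym2 V => v ∈ e), x e = t

/-- `T m n t` is the number of magic labellings of sum `t` of the grid graph `G(m,n)`. -/
noncomputable def T (m n t : ℕ) : ℕ :=
  Nat.card {x : Sym2 (Fin n × Fin m) → ℕ // IsMagicLabelling (gridGraph m n) x t}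

/-- The dimension of a polytope: the dimension of its affine hull. -/
noncomputable def polytopeDim {ι : Type*} (P : Set (ι → ℝ)) : ℕ :=
  Module.finrank ℝ (vectorSpan ℝ P)

/-- `(h 0, …, h k)` is the Ehrhart h-vector of a `d`-dimensional integral polytope `P`:
`∑_{t ≥ 0} L_P(t) z^t = (h_0 + h_1 z + ⋯ + h_k z^k)/(1 - z)^{d+1}` with `h k ≠ 0`,
expressed coefficientwise via `1/(1-z)^{d+1} = ∑_t C(t+d, d) z^t`. -/
def IsEhrhartHVector {ι : Type*} (P : Set (ι → ℝ)) (d : ℕ) (h : ℕ → ℤ) (k : ℕ) : Prop :=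
  h k ≠ 0 ∧ (∀ j, k < j → h j = 0) ∧
  ∀ t : ℕ, (latticeCount P t : ℤ) =
    ∑ j ∈ Finset.range (k + 1), h j * ((t + d - j).choose d : ℤ)

/-- A finite sequence `h 0, …, h k` is unimodal. -/
def UnimodalVec (h : ℕ → ℤ) (k : ℕ) : Prop :=
  ∃ j, j ≤ k ∧ (∀ i, i < j → h i ≤ h (i + 1)) ∧ (∀ i, j ≤ i → i < k → h (i + 1) ≤ h i)

/-!
The affine hull of the polytope is spanned by differences of perfect matchings. Such a difference
vanishes off the edges and has zero sum at every vertex; on the grid, a vector with these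
properties is determined by its values on the vertical edges outside the last column (the
vertex sums force the horizontal edges to vanish column by column, and then the last column
bottom to top), so the dimension is at most `(m - 1)(n - 1)`. Conversely, as `mn` is even, every
unit square has two opposite sides in a common perfect matching (pair the two columns through
the square horizontally and tile the rest by vertical dominoes, or transpose); switching them
shows that the alternating boundary vector of the square lies in the span, and these vectors
already reach every value on those `(m - 1)(n - 1)` vertical edges.
-/

namespace SimpleGraph

variable {V : Type*} {G : SimpleGraph V}

variable (G) in
def perfectMatchingVectors : Set (Sym2 V → ℝ) :=
  {x | ∃ M : G.Subgraph, M.IsPerfectMatching ∧ x = Set.indicator M.edgeSet 1}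

lemma vectorSpan_pmPolytope :
    vectorSpan ℝ (pmPolytope G) = vectorSpan ℝ G.perfectMatchingVectors := by
  rw [pmPolytope, ← direction_affineSpan, affineSpan_convexHull, direction_affineSpan]
  rfl

section IncidenceKernel

variable [Fintype V]

variable (G) in
def incidenceKernel : Submodule ℝ (Sym2 V → ℝ) where
  carrier := {x | (∀ e ∉ G.edgeSet, x e = 0) ∧ ∀ v, ∑ w, x s(v, w) = 0}
  add_mem' := by
    rintro x y ⟨hx, hx'⟩ ⟨hy, hy'⟩
    exact ⟨fun e he => by simp [hx e he, hy e he],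
      fun v => by simp [Finset.sum_add_distrib, hx' v, hy' v]⟩
  zero_mem' := ⟨fun _ _ => rfl, fun _ => by simp⟩
  smul_mem' := by
    rintro c x ⟨hx, hx'⟩
    exact ⟨fun e he => by simp [hx e he], fun v => by simp [← Finset.mul_sum, hx' v]⟩

lemma sum_indicator_edgeSet_of_isPerfectMatching {M : G.Subgraph} (hM : M.IsPerfectMatching)
    (v : V) : ∑ w, Set.indicator M.edgeSet (1 : Sym2 V → ℝ) s(v, w) = 1 := by
  obtain ⟨w₀, hw₀, huniq⟩ := Subgraph.isPerfectMatching_iff.mp hM v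
  classical
  rw [Finset.sum_eq_single_of_mem w₀ (Finset.mem_univ _)]
  · simp [hw₀]
  · intro w _ hw
    simpa using fun h => hw (huniq w h)

lemma vectorSpan_perfectMatchingVectors_le_incidenceKernel :
    vectorSpan ℝ G.perfectMatchingVectors ≤ G.incidenceKernel := by
  rw [vectorSpan_def, Submodule.span_le]
  rintro _ ⟨_, ⟨M, hM, rfl⟩, _, ⟨N, hN, rfl⟩, rfl⟩
  refine ⟨fun e he => ?_, fun v => ?_⟩
  · have hsub {K : G.Subgraph} : e ∉ K.edgeSet := fun h => he (K.edgeSet_subset h)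
    simp [Set.indicator_of_notMem hsub]
  · simp [Finset.sum_sub_distrib, sum_indicator_edgeSet_of_isPerfectMatching hM,
      sum_indicator_edgeSet_of_isPerfectMatching hN]

lemma apply_eq_zero_of_mem_incidenceKernel {x : Sym2 V → ℝ} (hx : x ∈ G.incidenceKernel) {v w₀ : V}
    (h : ∀ w, G.Adj v w → w ≠ w₀ → x s(v, w) = 0) : x s(v, w₀) = 0 := by
  have hv := hx.2 v
  classical
  rwa [Finset.sum_eq_single_of_mem w₀ (Finset.mem_univ _)] at hv
  intro w _ hw
  by_cases hadj : G.Adj v w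
  · exact h w hadj hw
  · exact hx.1 _ hadj

end IncidenceKernel

def Subgraph.ofInvolutive (σ : V → V) (hσ : Function.Involutive σ)
    (hadj : ∀ v, G.Adj v (σ v)) : G.Subgraph where
  verts := Set.univ
  Adj v w := σ v = w
  adj_sub h := h ▸ hadj _
  edge_vert _ := Set.mem_univ _
  symm := ⟨fun v _ h => h ▸ hσ v⟩

lemma Subgraph.isPerfectMatching_ofInvolutive (σ : V → V) (hσ : Function.Involutive σ)
    (hadj : ∀ v, G.Adj v (σ v)) : (Subgraph.ofInvolutive σ hσ hadj).IsPerfectMatching :=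
  Subgraph.isPerfectMatching_iff.mpr fun v => ⟨σ v, rfl, fun _ (h : σ v = _) => h.symm⟩

variable [DecidableEq V]

lemma Subgraph.indicator_edgeSet_ofInvolutive (σ : V → V) (hσ : Function.Involutive σ)
    (hadj : ∀ v, G.Adj v (σ v)) (v w : V) :
    Set.indicator (Subgraph.ofInvolutive σ hσ hadj).edgeSet (1 : Sym2 V → ℝ) s(v, w) =
      if w = σ v then 1 else 0 := by
  by_cases h : σ v = w
  · simp [Set.indicator_of_mem (show s(v, w) ∈ (ofInvolutive σ hσ hadj).edgeSet from h), h]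
  · simp [Set.indicator_of_notMem (show s(v, w) ∉ (ofInvolutive σ hσ hadj).edgeSet from h),
      Ne.symm h]

def fourCycleVec (a b c d : V) : Sym2 V → ℝ :=
  Pi.single s(a, b) 1 + Pi.single s(c, d) 1 - Pi.single s(b, c) 1 - Pi.single s(d, a) 1

lemma fourCycleVec_rotate (a b c d : V) : fourCycleVec b c d a = -fourCycleVec a b c d := by
  simp only [fourCycleVec]
  abel

/-- `τ` is `σ` with its pairs `ab`, `cd` replaced by `bc`, `da`. -/
lemma exists_involutive_switch (σ : V → V) (hσ : Function.Involutive σ)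
    (hadj : ∀ v, G.Adj v (σ v)) {a b c d : V} (hab : σ a = b) (hcd : σ c = d) (hac : a ≠ c)
    (hbc : G.Adj b c) (hda : G.Adj d a) :
    ∃ τ : V → V, Function.Involutive τ ∧ (∀ v, G.Adj v (τ v)) ∧
      ∀ u w, ((if w = σ u then 1 else 0) - if w = τ u then 1 else 0 : ℝ) =
        fourCycleVec a b c d s(u, w) := by
  have hba : σ b = a := hab ▸ hσ a
  have hdc : σ d = c := hcd ▸ hσ c
  have hne_ab : a ≠ b := G.ne_of_adj (hab ▸ hadj a)
  have hne_cd : c ≠ d := G.ne_of_adj (hcd ▸ hadj c)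
  have hne_bd : b ≠ d := fun h => hac (hσ.injective (hab.trans (h.trans hcd.symm)))
  have hne_bc := G.ne_of_adj hbc
  have hne_da := G.ne_of_adj hda
  have := hac.symm; have := hne_ab.symm; have := hne_cd.symm; have := hne_bd.symm
  have := hne_bc.symm; have := hne_da.symm
  have hσa : ∀ x, σ x = a ↔ x = b := fun x => by rw [hσ.eq_iff, hab]
  have hσb : ∀ x, σ x = b ↔ x = a := fun x => by rw [hσ.eq_iff, hba]
  have hσc : ∀ x, σ x = c ↔ x = d := fun x => by rw [hσ.eq_iff, hcd]
  have hσd : ∀ x, σ x = d ↔ x = c := fun x => by rw [hσ.eq_iff, hdc]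
  let τ : V → V := fun x =>
    if x = a then d else if x = d then a else if x = b then c else if x = c then b else σ x
  have hτ : Function.Involutive τ := by
    intro x
    by_cases hx : x = a ∨ x = b ∨ x = c ∨ x = d
    · rcases hx with rfl | rfl | rfl | rfl <;> simp [τ, *]
    · push Not at hx
      simp [τ, hσ x, *]
  have hτadj : ∀ v, G.Adj v (τ v) := by
    intro x
    simp only [τ]
    split_ifs with h₁ h₂ h₃ h₄
    · exact h₁ ▸ hda.symm
    · exact h₂ ▸ hda
    · exact h₃ ▸ hbc
    · exact h₄ ▸ hbc.symm
    · exact hadj x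
  refine ⟨τ, hτ, hτadj, fun u w => ?_⟩
  by_cases hu : u = a ∨ u = b ∨ u = c ∨ u = d
  · rcases hu with rfl | rfl | rfl | rfl <;> simp [τ, fourCycleVec, Pi.single_apply, *]
  · push Not at hu
    simp [τ, fourCycleVec, *]

lemma fourCycleVec_mem_vectorSpan (σ : V → V) (hσ : Function.Involutive σ)
    (hadj : ∀ v, G.Adj v (σ v)) {a b c d : V} (hab : σ a = b) (hcd : σ c = d) (hac : a ≠ c)
    (hbc : G.Adj b c) (hda : G.Adj d a) :
    fourCycleVec a b c d ∈ vectorSpan ℝ G.perfectMatchingVectors := by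
  obtain ⟨τ, hτ, hτadj, hsub⟩ := exists_involutive_switch σ hσ hadj hab hcd hac hbc hda
  convert vsub_mem_vectorSpan ℝ (s := G.perfectMatchingVectors)
    ⟨_, Subgraph.isPerfectMatching_ofInvolutive σ hσ hadj, rfl⟩
    ⟨_, Subgraph.isPerfectMatching_ofInvolutive τ hτ hτadj, rfl⟩
  ext e
  induction e using Sym2.ind with
  | _ u w => simp [Subgraph.indicator_edgeSet_ofInvolutive, hsub]

end SimpleGraph

open SimpleGraph

section Grid

variable {m n : ℕ}

lemma gridGraph_adj_iff {p q : Fin n × Fin m} : (gridGraph m n).Adj p q ↔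
    p.2 = q.2 ∧ (p.1.val + 1 = q.1.val ∨ q.1.val + 1 = p.1.val) ∨
    p.1 = q.1 ∧ (p.2.val + 1 = q.2.val ∨ q.2.val + 1 = p.2.val) := by
  change Nat.dist _ _ + Nat.dist _ _ = 1 ↔ _
  simp only [Nat.dist, Fin.ext_iff]
  omega

lemma gridGraph_adj_swap {p q : Fin n × Fin m} :
    (gridGraph n m).Adj p.swap q.swap ↔ (gridGraph m n).Adj p q := by
  simp only [gridGraph_adj_iff, Prod.fst_swap, Prod.snd_swap]
  tauto

def columnPairMatching (i : ℕ) (hi : i + 1 < n) (hm : Even m) (p : Fin n × Fin m) :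
    Fin n × Fin m :=
  if h : p.1.val = i ∨ p.1.val = i + 1 then (⟨2 * i + 1 - p.1.val, by omega⟩, p.2)
  else (p.1, ⟨if p.2.val % 2 = 0 then p.2.val + 1 else p.2.val - 1, by
    obtain ⟨k, hk⟩ := hm
    have := p.2.isLt
    split <;> omega⟩)

lemma columnPairMatching_fst_val (i : ℕ) (hi : i + 1 < n) (hm : Even m) (p : Fin n × Fin m) :
    (columnPairMatching i hi hm p).1.val =
      if p.1.val = i ∨ p.1.val = i + 1 then 2 * i + 1 - p.1.val else p.1.val := by
  unfold columnPairMatching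
  split_ifs <;> rfl

lemma columnPairMatching_snd_val (i : ℕ) (hi : i + 1 < n) (hm : Even m) (p : Fin n × Fin m) :
    (columnPairMatching i hi hm p).2.val =
      if p.1.val = i ∨ p.1.val = i + 1 then p.2.val
      else if p.2.val % 2 = 0 then p.2.val + 1 else p.2.val - 1 := by
  unfold columnPairMatching
  split_ifs <;> rfl

lemma columnPairMatching_involutive (i : ℕ) (hi : i + 1 < n) (hm : Even m) :
    Function.Involutive (columnPairMatching i hi hm) := by
  intro p
  ext <;> simp only [columnPairMatching_fst_val, columnPairMatching_snd_val] <;> split_ifs <;> omega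

lemma gridGraph_adj_columnPairMatching (i : ℕ) (hi : i + 1 < n) (hm : Even m)
    (p : Fin n × Fin m) : (gridGraph m n).Adj p (columnPairMatching i hi hm p) := by
  simp only [gridGraph_adj_iff, Fin.ext_iff, columnPairMatching_fst_val, columnPairMatching_snd_val]
  obtain ⟨k, hk⟩ := hm
  have := p.2.isLt
  split_ifs <;> omega

def gridSquare (p : Fin (n - 1) × Fin (m - 1)) : Sym2 (Fin n × Fin m) → ℝ :=
  fourCycleVec (⟨p.1, by omega⟩, ⟨p.2, by omega⟩) (⟨p.1 + 1, by omega⟩, ⟨p.2, by omega⟩)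
    (⟨p.1 + 1, by omega⟩, ⟨p.2 + 1, by omega⟩) (⟨p.1, by omega⟩, ⟨p.2 + 1, by omega⟩)

lemma gridSquare_mem_vectorSpan (heven : Even (m * n)) (p : Fin (n - 1) × Fin (m - 1)) :
    gridSquare p ∈ vectorSpan ℝ (gridGraph m n).perfectMatchingVectors := by
  have hi : p.1.val + 1 < n := by omega
  have hj : p.2.val + 1 < m := by omega
  rcases Nat.even_mul.mp heven with hm | hn
  · refine fourCycleVec_mem_vectorSpan _ (columnPairMatching_involutive p.1 hi hm)
      (gridGraph_adj_columnPairMatching p.1 hi hm) ?_ ?_ ?_ ?_ ?_ <;>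
      simp [Prod.ext_iff, Fin.ext_iff, columnPairMatching_fst_val, columnPairMatching_snd_val,
        gridGraph_adj_iff] <;> omega
  · let σ := Prod.swap ∘ columnPairMatching p.2 hj hn ∘ Prod.swap
    have hσ : Function.Involutive σ := fun x => by
      simp [σ, columnPairMatching_involutive p.2 hj hn x.swap]
    have hadj (x : Fin n × Fin m) : (gridGraph m n).Adj x (σ x) :=
      gridGraph_adj_swap.mp (gridGraph_adj_columnPairMatching p.2 hj hn x.swap)
    rw [gridSquare, ← neg_mem_iff, ← fourCycleVec_rotate]
    refine fourCycleVec_mem_vectorSpan σ hσ hadj ?_ ?_ ?_ ?_ ?_ <;>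
      simp [σ, Prod.ext_iff, Fin.ext_iff, columnPairMatching_fst_val, columnPairMatching_snd_val,
        gridGraph_adj_iff] <;> omega

def gridVerticalEdge (p : Fin (n - 1) × Fin (m - 1)) : Sym2 (Fin n × Fin m) :=
  s((⟨p.1, by omega⟩, ⟨p.2, by omega⟩), (⟨p.1, by omega⟩, ⟨p.2 + 1, by omega⟩))

lemma gridSquare_apply_gridVerticalEdge (p q : Fin (n - 1) × Fin (m - 1)) :
    gridSquare p (gridVerticalEdge q) =
      -if q.2 = p.2 ∧ (q.1.val = p.1.val ∨ q.1.val = p.1.val + 1) then 1 else 0 := by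
  simp only [gridSquare, gridVerticalEdge, fourCycleVec, Pi.add_apply, Pi.sub_apply,
    Pi.single_apply, Sym2.eq_iff, Prod.ext_iff, Fin.ext_iff]
  by_cases h₂ : q.2.val = p.2.val <;> by_cases h₁ : q.1.val = p.1.val <;>
    by_cases h₁' : q.1.val = p.1.val + 1 <;> simp [h₁, h₁', h₂] <;> omega

section Propagation

variable {x : Sym2 (Fin n × Fin m) → ℝ} (hx : x ∈ (gridGraph m n).incidenceKernel)
  (hinner : ∀ u w : Fin n × Fin m, u.1 = w.1 → u.2.val + 1 = w.2.val → u.1.val + 1 < n →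
    x s(u, w) = 0)

include hx hinner in
lemma horizontal_eq_zero_of_mem_incidenceKernel_gridGraph {u w : Fin n × Fin m}
    (h₁ : u.1.val + 1 = w.1.val) (h₂ : u.2 = w.2) : x s(u, w) = 0 := by
  induction hu : u.1.val using Nat.strong_induction_on generalizing u w with
  | _ a ih =>
  refine apply_eq_zero_of_mem_incidenceKernel hx fun w' hadj hne => ?_
  rcases gridGraph_adj_iff.mp hadj with ⟨h₂', h₁' | h₁'⟩ | ⟨h₁', h₂' | h₂'⟩
  · exact absurd (Prod.ext (Fin.ext (by omega)) (h₂'.symm.trans h₂)) hne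
  · rw [Sym2.eq_swap]
    exact ih (a - 1) (by omega) h₁' h₂'.symm (by omega)
  · exact hinner u w' h₁' h₂' (by have := w.1.isLt; omega)
  · rw [Sym2.eq_swap]
    exact hinner w' u h₁'.symm h₂' (by have := w.1.isLt; omega)

include hx hinner in
lemma vertical_eq_zero_of_mem_incidenceKernel_gridGraph {u w : Fin n × Fin m}
    (h₁ : u.1 = w.1) (h₂ : u.2.val + 1 = w.2.val) : x s(u, w) = 0 := by
  induction hu : u.2.val using Nat.strong_induction_on generalizing u w with
  | _ b ih =>
  by_cases hlast : u.1.val + 1 < n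
  · exact hinner u w h₁ h₂ hlast
  refine apply_eq_zero_of_mem_incidenceKernel hx fun w' hadj hne => ?_
  rcases gridGraph_adj_iff.mp hadj with ⟨h₂', h₁' | h₁'⟩ | ⟨h₁', h₂' | h₂'⟩
  · exact absurd w'.1.isLt (by omega)
  · rw [Sym2.eq_swap]
    exact horizontal_eq_zero_of_mem_incidenceKernel_gridGraph hx hinner h₁' h₂'.symm
  · exact absurd (Prod.ext (h₁'.symm.trans h₁) (Fin.ext (by omega))) hne
  · rw [Sym2.eq_swap]
    exact ih (b - 1) (by omega) h₁'.symm h₂' (by omega)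

end Propagation

lemma eq_zero_of_mem_incidenceKernel_gridGraph {x : Sym2 (Fin n × Fin m) → ℝ}
    (hx : x ∈ (gridGraph m n).incidenceKernel)
    (hvert : ∀ p : Fin (n - 1) × Fin (m - 1), x (gridVerticalEdge p) = 0) : x = 0 := by
  have hinner (u w : Fin n × Fin m) (h₁ : u.1 = w.1) (h₂ : u.2.val + 1 = w.2.val)
      (hu : u.1.val + 1 < n) : x s(u, w) = 0 := by
    have := w.2.isLt
    convert hvert (⟨u.1, by omega⟩, ⟨u.2, by omega⟩) using 2
    simp only [gridVerticalEdge, Sym2.eq_iff, Prod.ext_iff, Fin.ext_iff, true_and] at h₁ ⊢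
    omega
  ext e
  induction e using Sym2.ind with
  | _ u w =>
  by_cases hadj : (gridGraph m n).Adj u w
  · rcases gridGraph_adj_iff.mp hadj with ⟨h₂, h₁ | h₁⟩ | ⟨h₁, h₂ | h₂⟩
    · exact horizontal_eq_zero_of_mem_incidenceKernel_gridGraph hx hinner h₁ h₂
    · rw [Sym2.eq_swap]
      exact horizontal_eq_zero_of_mem_incidenceKernel_gridGraph hx hinner h₁ h₂.symm
    · exact vertical_eq_zero_of_mem_incidenceKernel_gridGraph hx hinner h₁ h₂
    · rw [Sym2.eq_swap]
      exact vertical_eq_zero_of_mem_incidenceKernel_gridGraph hx hinner h₁.symm h₂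
  · exact hx.1 _ hadj

lemma finrank_incidenceKernel_gridGraph_le :
    Module.finrank ℝ (gridGraph m n).incidenceKernel ≤ (m - 1) * (n - 1) := by
  have hinj : Function.Injective ((LinearMap.funLeft ℝ ℝ gridVerticalEdge).domRestrict
      (gridGraph m n).incidenceKernel) := by
    refine (injective_iff_map_eq_zero _).mpr fun x hx => Subtype.ext ?_
    exact eq_zero_of_mem_incidenceKernel_gridGraph x.2 fun p => congrFun hx p
  calc Module.finrank ℝ (gridGraph m n).incidenceKernel
      ≤ Module.finrank ℝ (Fin (n - 1) × Fin (m - 1) → ℝ) :=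
        LinearMap.finrank_le_finrank_of_injective hinj
    _ = (m - 1) * (n - 1) := by simp [mul_comm]

lemma map_funLeft_gridVerticalEdge_vectorSpan (heven : Even (m * n)) :
    (vectorSpan ℝ (gridGraph m n).perfectMatchingVectors).map
      (LinearMap.funLeft ℝ ℝ gridVerticalEdge) = ⊤ := by
  set W := (vectorSpan ℝ (gridGraph m n).perfectMatchingVectors).map
      (LinearMap.funLeft ℝ ℝ gridVerticalEdge)
  have hsq (p : Fin (n - 1) × Fin (m - 1)) :
      LinearMap.funLeft ℝ ℝ gridVerticalEdge (gridSquare p) ∈ W :=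
    Submodule.mem_map_of_mem (gridSquare_mem_vectorSpan heven p)
  -- The square in column `a` meets the vertical edges of columns `a` and `a + 1`, so the unit
  -- vectors are reached from the last column leftwards.
  have hsingle (k : ℕ) (p : Fin (n - 1) × Fin (m - 1)) (hp : p.1.val + k + 1 = n - 1) :
      Pi.single p 1 ∈ W := by
    induction k generalizing p with
    | zero =>
      convert neg_mem (hsq p) using 1
      ext q
      simp only [Pi.single_apply, LinearMap.funLeft_apply, gridSquare_apply_gridVerticalEdge,
        Pi.neg_apply, neg_neg, Prod.ext_iff, Fin.ext_iff]
      have := q.1.isLt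
      split_ifs <;> first | omega | norm_num
    | succ k ih =>
      let p' : Fin (n - 1) × Fin (m - 1) := (⟨p.1 + 1, by omega⟩, p.2)
      convert sub_mem (neg_mem (hsq p)) (ih p' (by simp only [p']; omega)) using 1
      ext q
      simp only [Pi.single_apply, LinearMap.funLeft_apply, gridSquare_apply_gridVerticalEdge,
        Pi.sub_apply, Pi.neg_apply, neg_neg, Prod.ext_iff, Fin.ext_iff, p']
      split_ifs <;> first | omega | norm_num
  rw [eq_top_iff, ← (Pi.basisFun ℝ _).span_eq, Submodule.span_le]
  rintro _ ⟨p, rfl⟩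
  rw [Pi.basisFun_apply]
  exact hsingle (n - 1 - p.1.val - 1) p (by omega)

lemma le_finrank_vectorSpan_perfectMatchingVectors_gridGraph (heven : Even (m * n)) :
    (m - 1) * (n - 1) ≤ Module.finrank ℝ (vectorSpan ℝ (gridGraph m n).perfectMatchingVectors) :=
  calc (m - 1) * (n - 1)
      = Module.finrank ℝ ((vectorSpan ℝ (gridGraph m n).perfectMatchingVectors).map
          (LinearMap.funLeft ℝ ℝ gridVerticalEdge)) := by
        rw [map_funLeft_gridVerticalEdge_vectorSpan heven]
        simp [mul_comm]
    _ ≤ _ := Submodule.finrank_map_le _ _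

end Grid

theorem pm_polytope_grid_dim_general (m n : ℕ) (heven : Even (m * n)) :
    polytopeDim (pmPolytope (gridGraph m n)) = (m - 1) * (n - 1) := by
  rw [polytopeDim, vectorSpan_pmPolytope]
  exact le_antisymm
    ((Submodule.finrank_mono vectorSpan_perfectMatchingVectors_le_incidenceKernel).trans
      finrank_incidenceKernel_gridGraph_le)
    (le_finrank_vectorSpan_perfectMatchingVectors_gridGraph heven)

/-- If `m, n ≥ 1` and `mn` is even, then
`dim P(m,n) = (m - 1)(n - 1)`. -/
theorem pm_polytope_grid_dim (m n : ℕ) (hm : 1 ≤ m) (hn : 1 ≤ n)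
    (heven : Even (m * n)) :
    polytopeDim (pmPolytope (gridGraph m n)) = (m - 1) * (n - 1) :=
  pm_polytope_grid_dim_general m n heven
end

section
/- Let n > 2 be even, let t ≥ 0 be an integer, and let x be a magic labelling of sum t of the grid graph G(3,n). For 1 ≤ i ≤ n−1, let a_i, b_i, c_i denote the labels x assigns to the horizontal edges {(i−1,2),(i,2)}, {(i−1,1),(i,1)}, {(i−1,0),(i,0)} (top, middle, and bottom rows, respectively). Then c_i = b_i − a_i for all even i, and c_i = t − a_i + b_i for all odd i. -/
/-! The sign `(-1)^(i + r)` of the vertex `(i, r)` alternates along every edge of the grid.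
Summing the vertex equations over the columns `0, …, i - 1` with these signs, every edge inside
those columns occurs twice with opposite signs, so only the horizontal edges from column `i - 1`
to column `i` survive: `(-1)^(i-1) (c_i - b_i + a_i) = t ∑_{j<i} (-1)^j`, which is `t` for odd `i`
and `0` for even `i`. -/

open Finset Pointwise

namespace IsMagicLabelling

variable {V : Type*} [Fintype V] [DecidableEq V] {G : SimpleGraph V} {x : Sym2 V → ℕ} {t : ℕ}

theorem eq_zero_of_not_adj (hx : IsMagicLabelling G x t) {u v : V} (h : ¬G.Adj u v) :
    x s(u, v) = 0 :=
  hx.1 _ h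

theorem sum_apply_mk (hx : IsMagicLabelling G x t) (v : V) : ∑ u, x s(v, u) = t := by
  rw [← hx.2 v]
  refine sum_bij' (fun u _ => s(v, u)) (fun e he => Sym2.Mem.other (mem_filter.mp he).2)
    (fun _ _ => by simp) (fun _ _ => mem_univ _) (fun _ _ => ?_) (fun _ _ => Sym2.other_spec _)
    (fun _ _ => rfl)
  exact Sym2.congr_right.mp (Sym2.other_spec _)

theorem mul_sum_eq_sum_sum_compl (hx : IsMagicLabelling G x t) {σ : V → ℤ}
    (hσ : ∀ u v, G.Adj u v → σ u = -σ v) (S : Finset V) :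
    t * ∑ v ∈ S, σ v = ∑ v ∈ S, ∑ u ∈ Sᶜ, σ v * x s(v, u) := by
  have hanti : ∀ u v, σ u * x s(u, v) = -(σ v * x s(v, u)) := by
    intro u v
    by_cases h : G.Adj u v
    · rw [hσ u v h, Sym2.eq_swap]; ring
    · rw [hx.eq_zero_of_not_adj h, Sym2.eq_swap, hx.eq_zero_of_not_adj h]; simp
  have hinside : ∑ v ∈ S, ∑ u ∈ S, σ v * x s(v, u) = 0 := by
    have h : ∑ v ∈ S, ∑ u ∈ S, σ v * x s(v, u) = -∑ v ∈ S, ∑ u ∈ S, σ v * x s(v, u) :=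
      calc _ = ∑ u ∈ S, ∑ v ∈ S, σ v * x s(v, u) := sum_comm
        _ = ∑ u ∈ S, ∑ v ∈ S, -(σ u * x s(u, v)) :=
          sum_congr rfl fun _ _ => sum_congr rfl fun _ _ => hanti _ _
        _ = _ := by simp only [sum_neg_distrib]
    linarith
  calc t * ∑ v ∈ S, σ v = ∑ v ∈ S, σ v * ∑ u, (x s(v, u) : ℤ) := by
        rw [mul_comm, sum_mul]
        refine sum_congr rfl fun v _ => ?_
        rw [← Nat.cast_sum, hx.sum_apply_mk]
    _ = ∑ v ∈ S, (∑ u ∈ S, σ v * x s(v, u) + ∑ u ∈ Sᶜ, σ v * x s(v, u)) := by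
        simp only [sum_add_sum_compl, mul_sum]
    _ = ∑ v ∈ S, ∑ u ∈ Sᶜ, σ v * x s(v, u) := by
        rw [sum_add_distrib, hinside, zero_add]

end IsMagicLabelling

section GridGraph

variable {m n : ℕ}

theorem gridGraph_adj_neg_one_pow {u v : Fin n × Fin m} (h : (gridGraph m n).Adj u v) :
    (-1 : ℤ) ^ (u.1.val + u.2.val) = -(-1) ^ (v.1.val + v.2.val) := by
  have h' : Nat.dist u.1.val v.1.val + Nat.dist u.2.val v.2.val = 1 := h
  unfold Nat.dist at h'
  rcases (by omega : u.1.val + u.2.val = v.1.val + v.2.val + 1 ∨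
      v.1.val + v.2.val = u.1.val + u.2.val + 1) with h | h <;>
    rw [h, pow_succ] <;> ring

theorem gridGraph_adj_of_le_of_lt {j k : Fin n} (hjk : j.val + 1 = k.val)
    {u v : Fin n × Fin m} (h : (gridGraph m n).Adj u v) (hu : u.1 ≤ j) (hv : j < v.1) :
    u.1 = j ∧ v.1 = k ∧ u.2 = v.2 := by
  have h' : Nat.dist u.1.val v.1.val + Nat.dist u.2.val v.2.val = 1 := h
  unfold Nat.dist at h'
  rw [Fin.le_def] at hu
  rw [Fin.lt_def] at hv
  refine ⟨Fin.ext ?_, Fin.ext ?_, Fin.ext ?_⟩ <;> omega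

theorem sum_Iic_product_neg_one_pow (j : Fin n) :
    ∑ v ∈ Iic j ×ˢ (univ : Finset (Fin m)), (-1 : ℤ) ^ (v.1.val + v.2.val) =
      (∑ a ∈ range (j.val + 1), (-1) ^ a) * ∑ r ∈ range m, (-1) ^ r := by
  rw [Nat.range_succ_eq_Iic, ← Fin.map_valEmbedding_Iic, sum_map,
    ← Fin.sum_univ_eq_sum_range (fun r => (-1 : ℤ) ^ r) m, sum_mul_sum, sum_product]
  simp only [pow_add, Fin.valEmbedding_apply]

theorem IsMagicLabelling.gridGraph_sum_sum_compl {x : Sym2 (Fin n × Fin m) → ℕ} {t : ℕ}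
    (hx : IsMagicLabelling (gridGraph m n) x t) {j k : Fin n} (hjk : j.val + 1 = k.val)
    (f : Fin n × Fin m → ℤ) :
    ∑ v ∈ Iic j ×ˢ univ, ∑ u ∈ (Iic j ×ˢ univ)ᶜ, f v * x s(v, u) =
      ∑ r, f (j, r) * x s((j, r), (k, r)) := by
  rw [← sum_product']
  symm
  refine sum_bij_ne_zero (fun r _ _ => ((j, r), (k, r))) ?_ ?_ ?_ ?_
  · intro r _ _
    simp only [mem_product, mem_compl, mem_Iic, mem_univ, and_true, le_refl, true_and, not_le,
      Fin.lt_def]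
    omega
  · intro r _ _ r' _ _ h
    exact congrArg (fun p => p.1.2) h
  · rintro ⟨v, u⟩ hvu hne
    simp only [mem_product, mem_compl, mem_Iic, mem_univ, and_true, not_le] at hvu
    have hadj : (gridGraph m n).Adj v u := by
      by_contra h
      simp [hx.eq_zero_of_not_adj h] at hne
    obtain ⟨hv, hu, hr⟩ := gridGraph_adj_of_le_of_lt hjk hadj hvu.1 hvu.2
    have hv' : v = (j, v.2) := Prod.ext hv rfl
    have hu' : u = (k, v.2) := Prod.ext hu hr.symm
    refine ⟨v.2, mem_univ _, ?_, ?_⟩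
    · rwa [← hv', ← hu']
    · rw [← hv', ← hu']
  · intro _ _ _
    rfl

theorem IsMagicLabelling.gridGraph_alternating_sum {x : Sym2 (Fin n × Fin m) → ℕ} {t : ℕ}
    (hx : IsMagicLabelling (gridGraph m n) x t) {j k : Fin n} (hjk : j.val + 1 = k.val) :
    ∑ r : Fin m, (-1) ^ (j.val + r.val) * (x s((j, r), (k, r)) : ℤ) =
      t * ((∑ a ∈ range (j.val + 1), (-1) ^ a) * ∑ r ∈ range m, (-1) ^ r) := by
  have hcut := hx.mul_sum_eq_sum_sum_compl (fun _ _ => gridGraph_adj_neg_one_pow) (Iic j ×ˢ univ)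
  rw [sum_Iic_product_neg_one_pow, hx.gridGraph_sum_sum_compl hjk] at hcut
  exact hcut.symm

end GridGraph

/-- Let `n > 2` be even and `x` a magic labelling of sum `t` of
`G(3,n)`. With `a_i`, `b_i`, `c_i` the labels of the `i`-th horizontal edges in the
top (row 2), middle (row 1), and bottom (row 0) rows, one has `c_i = b_i - a_i` for
even `i` and `c_i = t - a_i + b_i` for odd `i`. -/
theorem magic_labelling_grid_three_rows (n : ℕ) (t : ℕ)
    (x : Sym2 (Fin n × Fin 3) → ℕ) (hx : IsMagicLabelling (gridGraph 3 n) x t)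
    (i : ℕ) (h1 : 1 ≤ i) (h2 : i ≤ n - 1) :
    (Even i →
      (x s(((⟨i - 1, by omega⟩ : Fin n), (0 : Fin 3)), ((⟨i, by omega⟩ : Fin n), (0 : Fin 3))) : ℤ) =
        (x s(((⟨i - 1, by omega⟩ : Fin n), (1 : Fin 3)), ((⟨i, by omega⟩ : Fin n), (1 : Fin 3))) : ℤ) -
        (x s(((⟨i - 1, by omega⟩ : Fin n), (2 : Fin 3)), ((⟨i, by omega⟩ : Fin n), (2 : Fin 3))) : ℤ)) ∧
    (Odd i →
      (x s(((⟨i - 1, by omega⟩ : Fin n), (0 : Fin 3)), ((⟨i, by omega⟩ : Fin n), (0 : Fin 3))) : ℤ) =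
        (t : ℤ) -
        (x s(((⟨i - 1, by omega⟩ : Fin n), (2 : Fin 3)), ((⟨i, by omega⟩ : Fin n), (2 : Fin 3))) : ℤ) +
        (x s(((⟨i - 1, by omega⟩ : Fin n), (1 : Fin 3)), ((⟨i, by omega⟩ : Fin n), (1 : Fin 3))) : ℤ)) := by
  have key := hx.gridGraph_alternating_sum (j := ⟨i - 1, by omega⟩) (k := ⟨i, by omega⟩)
    (by simp only; omega)
  have hpow : (-1 : ℤ) ^ i = -(-1) ^ (i - 1) := by
    rw [← Nat.sub_add_cancel h1, pow_succ, Nat.add_sub_cancel, mul_neg_one]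
  simp only [Fin.sum_univ_three, Fin.val_zero, Fin.val_one, Fin.val_two, Nat.sub_add_cancel h1,
    add_zero, pow_add _ (i - 1) 2, neg_one_sq, mul_one, hpow, neg_one_geom_sum,
    show ¬Even 3 by decide, if_false] at key
  refine ⟨fun hi => ?_, fun hi => ?_⟩
  · rw [(Nat.Even.sub_odd h1 hi odd_one).neg_one_pow, if_pos hi] at key
    linarith
  · rw [(Nat.Odd.sub_odd hi odd_one).neg_one_pow, if_neg (Nat.not_even_iff_odd.mpr hi)] at key
    linarith
end

section
/- For all positive integers m, n, t, every magic labelling of sum t of the grid graph G(m,n) can be written as the sum of the incidence vectors of t perfect matchings of G(m,n) (i.e., every magic labelling of sum t can be realized as a domino stacking of height t of the m×n board). -/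
open Finset Pointwise

/-!
The grid graph is bipartite (colour `(i, j)` by the parity of `i + j`), and a magic labelling of
sum `t` of a bipartite graph is a `t`-regular bipartite multigraph, which splits into `t` perfect
matchings (König). For `t > 0`, double counting the labels at a set `A` of vertices and at the
set of vertices joined to `A` by a nonzero label gives Hall's condition, so the support of the
labelling contains a permutation `σ` of the vertices. Following `σ` from one colour class and
`σ⁻¹` from the other is an involution along edges, i.e. a perfect matching inside the support;
removing it leaves a magic labelling of sum `t - 1`.
-/

namespace Sym2

theorem sum_filter_mem_eq_sum_mk {V M : Type*} [Fintype V] [DecidableEq V] [AddCommMonoid M]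
    (f : Sym2 V → M) (v : V) :
    ∑ e ∈ univ.filter (fun e : Sym2 V => v ∈ e), f e = ∑ w, f s(v, w) := by
  symm
  refine Finset.sum_nbij (fun w => s(v, w)) (by simp) (fun a _ b _ h => Sym2.congr_right.mp h)
    (fun e he => ?_) (fun _ _ => rfl)
  obtain ⟨w, rfl⟩ := Sym2.mem_iff_exists.mp (mem_filter.mp he).2
  exact ⟨w, mem_univ w, rfl⟩

end Sym2

section VertexSums

variable {V : Type*} [Fintype V] {x : Sym2 V → ℕ} {t : ℕ}

theorem card_le_card_filter_exists_ne_zero_of_sum_mk_eq (hx : ∀ v, ∑ w, x s(v, w) = t)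
    (ht : 0 < t) (A : Finset V) :
    #A ≤ #(univ.filter fun w => ∃ v ∈ A, x s(v, w) ≠ 0) := by
  set N := univ.filter fun w => ∃ v ∈ A, x s(v, w) ≠ 0
  refine le_of_mul_le_mul_left ?_ ht
  calc t * #A = ∑ v ∈ A, ∑ w, x s(v, w) := by simp [hx, mul_comm]
    _ = ∑ v ∈ A, ∑ w ∈ N, x s(v, w) := by
      refine sum_congr rfl fun v hv => (sum_subset (subset_univ N) fun w _ hw => ?_).symm
      by_contra h
      exact hw (mem_filter.mpr ⟨mem_univ w, v, hv, h⟩)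
    _ = ∑ w ∈ N, ∑ v ∈ A, x s(w, v) := by
      rw [sum_comm]
      simp only [Sym2.eq_swap]
    _ ≤ ∑ w ∈ N, ∑ v, x s(w, v) := sum_le_sum fun w _ => sum_le_sum_of_subset (subset_univ A)
    _ = t * #N := by simp [hx, mul_comm]

theorem exists_perm_forall_ne_zero_of_sum_mk_eq (hx : ∀ v, ∑ w, x s(v, w) = t) (ht : 0 < t) :
    ∃ σ : Equiv.Perm V, ∀ v, x s(v, σ v) ≠ 0 := by
  obtain ⟨f, hf, hfx⟩ := (Fintype.all_card_le_filter_rel_iff_exists_injective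
    (fun v w => x s(v, w) ≠ 0)).mp (card_le_card_filter_exists_ne_zero_of_sum_mk_eq hx ht)
  exact ⟨Equiv.ofBijective f (Finite.injective_iff_bijective.mp hf), hfx⟩

theorem eq_zero_of_sum_mk_eq_zero (hx : ∀ v, ∑ w, x s(v, w) = 0) : x = 0 := by
  funext e
  induction e using Sym2.ind with
  | _ v w => exact (sum_eq_zero_iff.mp (hx v)) w (mem_univ w)

end VertexSums

namespace SimpleGraph

variable {V : Type*} {G : SimpleGraph V}

theorem exists_isPerfectMatching_of_involutive {p : V → V} (hp : Function.Involutive p)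
    (hadj : ∀ v, G.Adj v (p v)) :
    ∃ M : G.Subgraph, M.IsPerfectMatching ∧ ∀ v w, M.Adj v w → w = p v := by
  let M : G.Subgraph :=
    { verts := Set.univ
      Adj := fun v w => p v = w
      adj_sub := by rintro v _ rfl; exact hadj v
      edge_vert := fun _ => trivial
      symm := ⟨fun v _ h => h ▸ hp v⟩ }
  exact ⟨M, Subgraph.isPerfectMatching_iff.mpr fun v => ⟨p v, rfl, fun _ h => Eq.symm h⟩,
    fun _ _ h => Eq.symm h⟩

theorem Subgraph.IsPerfectMatching.isMagicLabelling_indicator [Fintype V] [DecidableEq V]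
    {M : G.Subgraph} (hM : M.IsPerfectMatching) :
    IsMagicLabelling G (Set.indicator M.edgeSet fun _ => 1) 1 := by
  classical
  refine ⟨fun e he => Set.indicator_of_notMem (fun h => he (M.edgeSet_subset h)) _, fun v => ?_⟩
  obtain ⟨w, hw, hw_unique⟩ := isPerfectMatching_iff.mp hM v
  rw [Sym2.sum_filter_mem_eq_sum_mk]
  calc ∑ u, _ = ∑ u, if u = w then 1 else 0 := sum_congr rfl fun u _ => by
        simp only [Set.indicator_apply, Subgraph.mem_edgeSet]
        exact if_congr ⟨hw_unique u, fun h => h ▸ hw⟩ rfl rfl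
    _ = 1 := by simp

end SimpleGraph

namespace IsMagicLabelling

open SimpleGraph

variable {V : Type*} [Fintype V] [DecidableEq V] {G : SimpleGraph V} {x : Sym2 V → ℕ} {t : ℕ}

theorem sum_mk (hx : IsMagicLabelling G x t) (v : V) : ∑ w, x s(v, w) = t := by
  rw [← Sym2.sum_filter_mem_eq_sum_mk, hx.2 v]

theorem adj_of_ne_zero (hx : IsMagicLabelling G x t) {v w : V} (h : x s(v, w) ≠ 0) :
    G.Adj v w := by
  by_contra hvw
  exact h (hx.1 _ hvw)

theorem tsub {s : ℕ} {y : Sym2 V → ℕ} (hx : IsMagicLabelling G x t)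
    (hy : IsMagicLabelling G y s) (hyx : y ≤ x) : IsMagicLabelling G (x - y) (t - s) := by
  refine ⟨fun e he => by simp [hx.1 e he], fun v => ?_⟩
  simp only [Pi.sub_apply]
  rw [sum_tsub_distrib _ fun e _ => hyx e, hx.2 v, hy.2 v]

theorem exists_isPerfectMatching_forall_ne_zero (hG : G.IsBipartite)
    (hx : IsMagicLabelling G x t) (ht : 0 < t) :
    ∃ M : G.Subgraph, M.IsPerfectMatching ∧ ∀ e ∈ M.edgeSet, x e ≠ 0 := by
  obtain ⟨σ, hσ⟩ := exists_perm_forall_ne_zero_of_sum_mk_eq hx.sum_mk ht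
  obtain ⟨c⟩ := hG
  have hσ' (v : V) : x s(v, σ.symm v) ≠ 0 := by
    simpa [Sym2.eq_swap] using hσ (σ.symm v)
  have hc {v w : V} (h : x s(v, w) ≠ 0) : c v = 0 ↔ c w ≠ 0 := by
    have := c.valid (hx.adj_of_ne_zero h)
    omega
  let p v := if c v = 0 then σ v else σ.symm v
  have hp : ∀ v, x s(v, p v) ≠ 0 := fun v => by
    by_cases h : c v = 0 <;> simp [p, h, hσ, hσ']
  have hp_inv : Function.Involutive p := fun v => by
    by_cases h : c v = 0
    · simp [p, h, (hc (hσ v)).mp h]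
    · have hσv : c (σ.symm v) = 0 := by simpa [h] using hc (hσ' v)
      simp [p, h, hσv]
  obtain ⟨M, hM, hMp⟩ :=
    exists_isPerfectMatching_of_involutive hp_inv fun v => hx.adj_of_ne_zero (hp v)
  refine ⟨M, hM, fun e he => ?_⟩
  induction e using Sym2.ind with
  | _ v w => exact hMp v w he ▸ hp v

theorem exists_sum_indicator_isPerfectMatching (hG : G.IsBipartite)
    (hx : IsMagicLabelling G x t) :
    ∃ M : Fin t → G.Subgraph, (∀ i, (M i).IsPerfectMatching) ∧
      ∀ e, x e = ∑ i : Fin t, Set.indicator (M i).edgeSet (fun _ => 1) e := by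
  induction t generalizing x with
  | zero => exact ⟨Fin.elim0, fun i => i.elim0, by simp [eq_zero_of_sum_mk_eq_zero hx.sum_mk]⟩
  | succ t ih =>
    obtain ⟨M₀, hM₀, hM₀x⟩ := hx.exists_isPerfectMatching_forall_ne_zero hG t.succ_pos
    have hle : (Set.indicator M₀.edgeSet fun _ => 1) ≤ x := fun e => by
      by_cases he : e ∈ M₀.edgeSet
      · simpa [he, Nat.one_le_iff_ne_zero] using hM₀x e he
      · simp [he]
    obtain ⟨M, hM, hMx⟩ := ih (hx.tsub hM₀.isMagicLabelling_indicator hle)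
    refine ⟨Fin.cons M₀ M, Fin.cases hM₀ hM, fun e => ?_⟩
    rw [Fin.sum_univ_succ, Fin.cons_zero]
    simp only [Fin.cons_succ, ← hMx e, Pi.sub_apply]
    exact (Nat.add_sub_cancel' (hle e)).symm

end IsMagicLabelling

theorem gridGraph_isBipartite (m n : ℕ) : (gridGraph m n).IsBipartite := by
  refine ⟨SimpleGraph.Coloring.mk (fun v => ⟨(v.1.val + v.2.val) % 2, Nat.mod_lt _ two_pos⟩)
    fun {v w} h => ?_⟩
  change Nat.dist v.1.val w.1.val + Nat.dist v.2.val w.2.val = 1 at h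
  simp only [Nat.dist] at h
  simp only [ne_eq, Fin.mk.injEq]
  omega

theorem magic_labelling_is_domino_stacking_general (m n t : ℕ) (x : Sym2 (Fin n × Fin m) → ℕ)
    (hx : IsMagicLabelling (gridGraph m n) x t) :
    ∃ M : Fin t → (gridGraph m n).Subgraph,
      (∀ i, (M i).IsPerfectMatching) ∧
      ∀ e, x e = ∑ i : Fin t, Set.indicator (M i).edgeSet (fun _ => 1) e :=
  hx.exists_sum_indicator_isPerfectMatching (gridGraph_isBipartite m n)

/-- Every magic labelling of sum `t` of the grid graph `G(m,n)` is
the sum of the incidence vectors of `t` perfect matchings of `G(m,n)`. -/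
theorem magic_labelling_is_domino_stacking (m n t : ℕ) (hm : 0 < m) (hn : 0 < n)
    (ht : 0 < t) (x : Sym2 (Fin n × Fin m) → ℕ)
    (hx : IsMagicLabelling (gridGraph m n) x t) :
    ∃ M : Fin t → (gridGraph m n).Subgraph,
      (∀ i, (M i).IsPerfectMatching) ∧
      ∀ e, x e = ∑ i : Fin t, Set.indicator (M i).edgeSet (fun _ => 1) e :=
  magic_labelling_is_domino_stacking_general m n t x hx
end
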